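/- arXiv:1603.00259 — 2 statements merged into one kernel-verified Lean document; each statement's English description precedes it below -/
import Mathlib

section
/- Let Ψ : ℝ≥0 → ℝ≥0 be a nondecreasing function satisfying Ψ(x) ≤ K(x+1) for all x ≥ 0, where K > 0. Then for every natural number n ≥ 1 and every x ≥ 0, Ψ(x) ≤ (n + 2K)·x + Ψ(2K/(n + 2K)). -/
theorem stmt_0 (Ψ : NNReal → NNReal) (hΨ : Monotone Ψ) (K : NNReal) (hK : 0 < K)
    (hgrowth : ∀ x, Ψ x ≤ K * (x + 1)) :
    ∀ n : ℕ, 1 ≤ n → ∀ x : NNReal,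
      Ψ x ≤ ((n : NNReal) + 2 * K) * x + Ψ (2 * K / ((n : NNReal) + 2 * K)) := by
  intro n hn x
  set c : NNReal := (n : NNReal) + 2 * K with hc
  have hc0 : c ≠ 0 := by
    have : 0 < c := lt_of_lt_of_le (by positivity) (le_add_self)
    exact this.ne'
  rcases le_total x (2 * K / c) with h | h
  · calc Ψ x ≤ Ψ (2 * K / c) := hΨ h
      _ ≤ c * x + Ψ (2 * K / c) := le_add_self
  · have hkey : 2 * K ≤ c * x := by
      have := (div_le_iff₀ hc0.bot_lt).mp h
      calc 2 * K ≤ x * c := this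
        _ = c * x := mul_comm _ _
    have h2 : K * (x + 1) ≤ c * x := by
      have hn' : (1 : NNReal) ≤ (n : NNReal) := by exact_mod_cast hn
      have hR : (2 : ℝ) * K ≤ c * x := by exact_mod_cast hkey
      have hnR : (1 : ℝ) ≤ (n : ℝ) := by exact_mod_cast hn
      have hcR : (c : ℝ) = (n : ℝ) + 2 * K := by push_cast [hc]; ring
      have hxR : (0 : ℝ) ≤ (x : NNReal) := x.2
      have hKR : (0 : ℝ) ≤ K := K.2
      have : (K : ℝ) * (x + 1) ≤ c * x := by nlinarith [hR, hcR]
      exact_mod_cast this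
    calc Ψ x ≤ K * (x + 1) := hgrowth x
      _ ≤ c * x := h2
      _ ≤ c * x + Ψ (2 * K / c) := le_self_add
end

section
/- With the setting of the inf-convolution approximation (g continuous with |g(y,z)| ≤ f + u|y| + v|z|, u, v > 0, and g_n(y,z) = inf_{(ȳ,z̄)}{g(ȳ,z̄) + nu|y−ȳ| + nv|z−z̄|}): if (y_n, z_n) → (y, z) in ℝ × ℝ^d, then g_n(y_n, z_n) → g(y, z) as n → ∞. -/
set_option maxHeartbeats 1000000 in
theorem stmt_13 (d : ℕ) (hd : 1 ≤ d)
    (g : ℝ × EuclideanSpace ℝ (Fin d) → ℝ) (hg : Continuous g)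
    (f u v : ℝ) (hf : 0 ≤ f) (hu : 0 < u) (hv : 0 < v)
    (hgrowth : ∀ (y : ℝ) (z : EuclideanSpace ℝ (Fin d)), |g (y, z)| ≤ f + u * |y| + v * ‖z‖)
    (gn : ℕ → ℝ × EuclideanSpace ℝ (Fin d) → ℝ)
    (hgn : ∀ (n : ℕ) (y : ℝ) (z : EuclideanSpace ℝ (Fin d)),
      gn n (y, z) = ⨅ q : ℝ × EuclideanSpace ℝ (Fin d),
        (g q + n * u * |y - q.1| + n * v * ‖z - q.2‖))
    (y : ℕ → ℝ) (z : ℕ → EuclideanSpace ℝ (Fin d)) (y₀ : ℝ) (z₀ : EuclideanSpace ℝ (Fin d))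
    (hconv : Filter.Tendsto (fun n => (y n, z n)) Filter.atTop (nhds (y₀, z₀))) :
    Filter.Tendsto (fun n => gn n (y n, z n)) Filter.atTop (nhds (g (y₀, z₀))) := by
  rw [Metric.tendsto_atTop]
  intro ε hε
  obtain ⟨δ, hδ, hδg⟩ := Metric.continuous_iff.mp hg (y₀, z₀) (ε/2) (by linarith)
  set M : ℝ := f + u*(|y₀|+1) + v*(‖z₀‖+1) with hM
  have hM0 : 0 < M := by positivity
  set K : ℝ := 2*M + ε/2 with hK
  have hK0 : 0 < K := by positivity
  set m : ℝ := min u v with hm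
  have hm0 : 0 < m := lt_min hu hv
  set c : ℝ := 2*K/(δ*m) with hc
  have hc0 : 0 < c := by positivity
  obtain ⟨N₁, hN₁⟩ := Metric.tendsto_atTop.mp hconv (min (δ/2) 1) (lt_min (by linarith) one_pos)
  obtain ⟨N₂, hN₂⟩ := exists_nat_gt (c + 2)
  refine ⟨max N₁ N₂, fun n hn => ?_⟩
  have hn1 := hN₁ n (le_trans (le_max_left _ _) hn)
  have hn2 : c + 2 < (n : ℝ) :=
    lt_of_lt_of_le hN₂ (Nat.cast_le.mpr (le_trans (le_max_right _ _) hn))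
  have hn1' : (1:ℝ) ≤ (n:ℝ) := by linarith
  rw [Prod.dist_eq] at hn1
  have hdy : dist (y n) y₀ < min (δ/2) 1 := lt_of_le_of_lt (le_max_left _ _) hn1
  have hdz : dist (z n) z₀ < min (δ/2) 1 := lt_of_le_of_lt (le_max_right _ _) hn1
  rw [Real.dist_eq] at hdy
  rw [dist_eq_norm] at hdz
  have hdy1 : |y n - y₀| < 1 := lt_of_lt_of_le hdy (min_le_right _ _)
  have hdz1 : ‖z n - z₀‖ < 1 := lt_of_lt_of_le hdz (min_le_right _ _)
  have hdyδ : |y n - y₀| < δ/2 := lt_of_lt_of_le hdy (min_le_left _ _)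
  have hdzδ : ‖z n - z₀‖ < δ/2 := lt_of_lt_of_le hdz (min_le_left _ _)
  have hyb : |y n| ≤ |y₀| + 1 := by
    have := abs_sub_abs_le_abs_sub (y n) y₀
    linarith
  have hzb : ‖z n‖ ≤ ‖z₀‖ + 1 := by
    have := norm_sub_norm_le (z n) z₀
    linarith
  -- bound on g at (y n, z n)
  have hgM : |g (y n, z n)| ≤ M := by
    have h1 := hgrowth (y n) (z n)
    have h2 : u * |y n| ≤ u * (|y₀| + 1) := mul_le_mul_of_nonneg_left hyb hu.le
    have h3 : v * ‖z n‖ ≤ v * (‖z₀‖ + 1) := mul_le_mul_of_nonneg_left hzb hv.le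
    rw [hM]; linarith
  -- lower bound on the function being minimized
  have hlow : ∀ q : ℝ × EuclideanSpace ℝ (Fin d),
      -M ≤ g q + n * u * |y n - q.1| + n * v * ‖z n - q.2‖ := by
    intro q
    have h1 : |g q| ≤ f + u * |q.1| + v * ‖q.2‖ := hgrowth q.1 q.2
    have h2 : |q.1| ≤ |y n| + |y n - q.1| := by
      have := abs_sub_abs_le_abs_sub q.1 (y n)
      rw [abs_sub_comm] at this
      linarith
    have h3 : ‖q.2‖ ≤ ‖z n‖ + ‖z n - q.2‖ := by
      have := norm_sub_norm_le q.2 (z n)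
      rw [norm_sub_rev] at this
      linarith
    have ha0 : (0:ℝ) ≤ |y n - q.1| := abs_nonneg _
    have hb0 : (0:ℝ) ≤ ‖z n - q.2‖ := norm_nonneg _
    have hgq : -(f + u * |q.1| + v * ‖q.2‖) ≤ g q := neg_le_of_abs_le h1
    have h2' : u * |q.1| ≤ u * |y n| + u * |y n - q.1| := by
      have := mul_le_mul_of_nonneg_left h2 hu.le
      linarith [mul_add u (|y n|) (|y n - q.1|)]
    have h3' : v * ‖q.2‖ ≤ v * ‖z n‖ + v * ‖z n - q.2‖ := by
      have := mul_le_mul_of_nonneg_left h3 hv.le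
      linarith [mul_add v (‖z n‖) (‖z n - q.2‖)]
    have h4 : u * |y n| ≤ u * (|y₀| + 1) := mul_le_mul_of_nonneg_left hyb hu.le
    have h5 : v * ‖z n‖ ≤ v * (‖z₀‖ + 1) := mul_le_mul_of_nonneg_left hzb hv.le
    have h6 : u * |y n - q.1| ≤ (n:ℝ) * u * |y n - q.1| := by
      have := mul_le_mul_of_nonneg_right (mul_le_mul_of_nonneg_right hn1' hu.le) ha0
      linarith [one_mul (u * |y n - q.1|)]
    have h7 : v * ‖z n - q.2‖ ≤ (n:ℝ) * v * ‖z n - q.2‖ := by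
      have := mul_le_mul_of_nonneg_right (mul_le_mul_of_nonneg_right hn1' hv.le) hb0
      linarith [one_mul (v * ‖z n - q.2‖)]
    rw [hM]; linarith
  have hbdd : BddBelow (Set.range fun q : ℝ × EuclideanSpace ℝ (Fin d) =>
      g q + n * u * |y n - q.1| + n * v * ‖z n - q.2‖) := by
    refine ⟨-M, ?_⟩
    rintro x ⟨q, rfl⟩
    exact hlow q
  -- upper bound
  have hup : gn n (y n, z n) ≤ g (y n, z n) := by
    rw [hgn]
    have := ciInf_le hbdd (y n, z n)
    simpa using this
  -- lower bound: near-minimizer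
  have hiInf : (⨅ q : ℝ × EuclideanSpace ℝ (Fin d),
      (g q + n * u * |y n - q.1| + n * v * ‖z n - q.2‖)) < gn n (y n, z n) + ε/2 := by
    rw [← hgn n (y n) (z n)]; linarith
  obtain ⟨q, hq⟩ := exists_lt_of_ciInf_lt hiInf
  set a : ℝ := |y n - q.1| with haa
  set b : ℝ := ‖z n - q.2‖ with hbb
  have ha0 : (0:ℝ) ≤ a := abs_nonneg _
  have hb0 : (0:ℝ) ≤ b := norm_nonneg _
  have hgq : -(f + u * |q.1| + v * ‖q.2‖) ≤ g q := neg_le_of_abs_le (hgrowth q.1 q.2)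
  have h2 : |q.1| ≤ |y n| + a := by
    have := abs_sub_abs_le_abs_sub q.1 (y n)
    rw [abs_sub_comm] at this
    linarith
  have h3 : ‖q.2‖ ≤ ‖z n‖ + b := by
    have := norm_sub_norm_le q.2 (z n)
    rw [norm_sub_rev] at this
    linarith
  have hgqM : -M - u*a - v*b ≤ g q := by
    have h2' : u * |q.1| ≤ u * (|y₀| + 1) + u * a := by
      have h2a : |q.1| ≤ (|y₀| + 1) + a := by linarith
      have := mul_le_mul_of_nonneg_left h2a hu.le
      linarith [mul_add u (|y₀| + 1) a]
    have h3' : v * ‖q.2‖ ≤ v * (‖z₀‖ + 1) + v * b := by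
      have h3a : ‖q.2‖ ≤ (‖z₀‖ + 1) + b := by linarith
      have := mul_le_mul_of_nonneg_left h3a hv.le
      linarith [mul_add v (‖z₀‖ + 1) b]
    rw [hM]; linarith
  have hgup : g (y n, z n) ≤ M := le_of_abs_le hgM
  -- so (u a + v b) * (n - 1) < K
  have hX : (u*a + v*b) * ((n:ℝ) - 1) < K := by
    rw [hK]; nlinarith [hq, hup, hgup, hgqM]
  have hncpos : (0:ℝ) < (n:ℝ) - 1 := by linarith
  have h1ab : m*(a+b) ≤ u*a + v*b := by
    have hmu : m ≤ u := min_le_left u v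
    have hmv : m ≤ v := min_le_right u v
    nlinarith
  have h2ab : m*(a+b)*((n:ℝ)-1) < K :=
    lt_of_le_of_lt (mul_le_mul_of_nonneg_right h1ab hncpos.le) hX
  have h3K : 2*K = c*(δ*m) := by
    rw [hc]; field_simp
  have h4K : c*(δ*m) < ((n:ℝ)-1)*(δ*m) :=
    mul_lt_mul_of_pos_right (by linarith) (by positivity)
  have habδ : a + b < δ/2 := by nlinarith [mul_pos hncpos hm0]
  -- q is close to (y₀, z₀)
  have hqdist : dist q (y₀, z₀) < δ := by
    rw [Prod.dist_eq]
    apply max_lt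
    · rw [Real.dist_eq]
      have : |q.1 - y₀| ≤ |q.1 - y n| + |y n - y₀| := abs_sub_le _ _ _
      rw [abs_sub_comm q.1 (y n)] at this
      linarith
    · rw [dist_eq_norm]
      have : ‖q.2 - z₀‖ ≤ ‖q.2 - z n‖ + ‖z n - z₀‖ := norm_sub_le_norm_sub_add_norm_sub _ _ _
      rw [norm_sub_rev q.2 (z n)] at this
      linarith
  have hgqc : dist (g q) (g (y₀, z₀)) < ε/2 := hδg q hqdist
  rw [Real.dist_eq] at hgqc
  have hgqlo : g (y₀, z₀) - ε/2 < g q := by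
    have := abs_sub_lt_iff.mp hgqc
    linarith [this.2]
  -- gn lower bound
  have hglow : g (y₀, z₀) - ε < gn n (y n, z n) := by
    have hna : 0 ≤ (n:ℝ) * u * a := by positivity
    have hnb : 0 ≤ (n:ℝ) * v * b := by positivity
    linarith
  -- gn upper bound
  have hpn : dist ((y n, z n) : ℝ × EuclideanSpace ℝ (Fin d)) (y₀, z₀) < δ := by
    rw [Prod.dist_eq]
    apply max_lt
    · rw [Real.dist_eq]; linarith
    · rw [dist_eq_norm]; linarith
  have hgpn : dist (g (y n, z n)) (g (y₀, z₀)) < ε/2 := hδg _ hpn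
  rw [Real.dist_eq] at hgpn
  have hghi : g (y n, z n) < g (y₀, z₀) + ε/2 := by
    have := abs_sub_lt_iff.mp hgpn
    linarith [this.1]
  rw [Real.dist_eq, abs_sub_lt_iff]
  constructor <;> linarith
end
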